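/- Let M belong to the class LC. Then M satisfies (genmg) for some d ∈ ℕ_{>0} if and only if there exist a ∈ ℕ_{>0}, A ≥ 1 and C ≥ 0 such that ω_{M·M̃^a}(t²) ≤ ω_M(At) + C for all t ≥ 0, where M·M̃^a denotes the pointwise product sequence. Moreover, if (genmg) holds with d then one can choose a := 2d, and if the weight-function estimate holds with a then (genmg) holds with d := a. -/

import Mathlib

open Real Filter Set

noncomputable section

/-- The class `LC` of normalized log-convex sequences with `(M_p)^{1/p} → ∞`. -/
def IsLC (M : ℕ → ℝ) : Prop :=
  (∀ p, 0 < M p) ∧ M 0 = 1 ∧ 1 ≤ M 1 ∧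
  (∀ p : ℕ, 1 ≤ p → (M p) ^ 2 ≤ M (p - 1) * M (p + 1)) ∧
  Filter.Tendsto (fun p : ℕ => (M p) ^ ((p : ℝ)⁻¹)) Filter.atTop Filter.atTop

/-- The sequence of quotients `μ_0 = 1`, `μ_p = M_p / M_{p-1}`. -/
def seqQuot (M : ℕ → ℝ) (p : ℕ) : ℝ :=
  if p = 0 then 1 else M p / M (p - 1)

/-- The associated weight function `ω_M(t) = sup_p log(t^p / M_p)`. -/
def omegaM (M : ℕ → ℝ) (t : ℝ) : ℝ :=
  ⨆ p : ℕ, Real.log (t ^ p / M p)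

/-- The auxiliary sequence `M̃^a_p = (M_{ap})^{1/a}`. -/
def tildeSeq (M : ℕ → ℝ) (a : ℕ) (p : ℕ) : ℝ :=
  (M (a * p)) ^ ((a : ℝ)⁻¹)

/-- Condition (genmg) for the parameter `d`. -/
def genMG (M : ℕ → ℝ) (d : ℕ) : Prop :=
  ∃ A : ℝ, 1 ≤ A ∧ ∀ p : ℕ, 1 ≤ p →
    seqQuot M p ≤ A * (M (d * p)) ^ (((d : ℝ) * (p : ℝ))⁻¹)

/-- The moderate growth index `g(M) ∈ ℕ ∪ {+∞}`. -/
def gIndex (M : ℕ → ℝ) : ℕ∞ :=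
  sInf {e : ℕ∞ | ∃ n : ℕ, 0 < n ∧ genMG M n ∧ e = (n : ℕ∞)}

/-- The relation `M ≼ N`, i.e. `sup_{p ≥ 1} (M_p/N_p)^{1/p} < ∞`. -/
def Preceq (M N : ℕ → ℝ) : Prop :=
  ∃ C : ℝ, ∀ p : ℕ, 1 ≤ p → (M p / N p) ^ ((p : ℝ)⁻¹) ≤ C

/-- The class `W₀` of normalized weight functions. -/
def IsW0 (ω : ℝ → ℝ) : Prop :=
  ContinuousOn ω (Set.Ici 0) ∧
  MonotoneOn ω (Set.Ici 0) ∧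
  (∀ t ∈ Set.Icc (0 : ℝ) 1, ω t = 0) ∧
  Filter.Tendsto ω Filter.atTop Filter.atTop ∧
  (fun t => Real.log t) =o[Filter.atTop] ω ∧
  ConvexOn ℝ Set.univ (fun t => ω (Real.exp t))

/-- The Legendre–Fenchel–Young conjugate `φ*_ω(x) = sup{xy − ω(e^y) : y ≥ 0}`. -/
def phiStar (ω : ℝ → ℝ) (x : ℝ) : ℝ :=
  sSup {z : ℝ | ∃ y : ℝ, 0 ≤ y ∧ z = x * y - ω (Real.exp y)}

/-- The associated weight matrix `W^(ℓ)_p = exp(φ*_ω(ℓp)/ℓ)`. -/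
def Wmat (ω : ℝ → ℝ) (l : ℝ) (p : ℕ) : ℝ :=
  Real.exp (phiStar ω (l * p) / l)

/-- Condition `(ω₆)`. -/
def Omega6 (ω : ℝ → ℝ) : Prop :=
  ∃ H : ℝ, 1 ≤ H ∧ ∀ t : ℝ, 0 ≤ t → 2 * ω t ≤ ω (H * t) + H

/-- The counting function `Σ_M(t) = #{p ≥ 1 : μ_p ≤ t}`. -/
def SigmaM (M : ℕ → ℝ) (t : ℝ) : ℕ :=
  Set.ncard {p : ℕ | 1 ≤ p ∧ seqQuot M p ≤ t}

end

/-- The weight-function condition of Corollary `omegaMcharacterzing1` for the parameter `a`. -/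
def S13P (M : ℕ → ℝ) (a : ℕ) : Prop :=
  ∃ A : ℝ, 1 ≤ A ∧ ∃ C : ℝ, 0 ≤ C ∧ ∀ t : ℝ, 0 ≤ t →
    omegaM (fun p => M p * tildeSeq M a p) (t ^ 2) ≤ omegaM M (A * t) + C

section aux
variable {M : ℕ → ℝ} (hpos : ∀ p, 0 < M p) (h0 : M 0 = 1) (h1 : 1 ≤ M 1)
  (hcv : ∀ p : ℕ, 1 ≤ p → (M p) ^ 2 ≤ M (p - 1) * M (p + 1))

include hpos h0 h1 hcv

omit h0 h1 hcv in
lemma seqQuot_pos (p : ℕ) : 0 < seqQuot M p := by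
  unfold seqQuot; split
  · norm_num
  · exact div_pos (hpos _) (hpos _)

lemma seqQuot_mono : Monotone (seqQuot M) := by
  apply monotone_nat_of_le_succ
  intro p
  match p with
  | 0 =>
    simp only [seqQuot, if_pos rfl, if_neg one_ne_zero]
    simpa [h0] using h1
  | p + 1 =>
    simp only [seqQuot, if_neg (Nat.succ_ne_zero p), if_neg (Nat.succ_ne_zero (p+1)),
      Nat.add_sub_cancel]
    rw [div_le_div_iff₀ (hpos _) (hpos _)]
    have := hcv (p + 1) (Nat.le_add_left 1 p)
    simpa [pow_two, Nat.add_sub_cancel, mul_comm] using this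

lemma one_le_seqQuot (p : ℕ) : 1 ≤ seqQuot M p := by
  have := seqQuot_mono hpos h0 h1 hcv (Nat.zero_le p)
  simpa [seqQuot] using this

omit h0 h1 hcv in
lemma M_succ_eq (p : ℕ) : M (p + 1) = M p * seqQuot M (p + 1) := by
  simp only [seqQuot, if_neg (Nat.succ_ne_zero p), Nat.add_sub_cancel]
  field_simp [ne_of_gt (hpos p)]

lemma one_le_M (p : ℕ) : 1 ≤ M p := by
  induction p with
  | zero => simp [h0]
  | succ n ih =>
    rw [M_succ_eq hpos]
    calc (1:ℝ) = 1 * 1 := by ring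
    _ ≤ M n * seqQuot M (n + 1) :=
      mul_le_mul ih (one_le_seqQuot hpos h0 h1 hcv _) zero_le_one (le_trans zero_le_one ih)

lemma M_le_mul_pow {q r : ℕ} (h : q ≤ r) : M r ≤ M q * seqQuot M r ^ (r - q) := by
  induction r with
  | zero => interval_cases q; simp
  | succ n ih =>
    rcases Nat.eq_or_lt_of_le h with rfl | hlt
    · simp
    · have hq : q ≤ n := Nat.lt_succ_iff.mp hlt
      have h2 : n + 1 - q = (n - q) + 1 := by omega
      rw [M_succ_eq hpos, h2, pow_succ]
      have hmono : seqQuot M n ≤ seqQuot M (n + 1) := seqQuot_mono hpos h0 h1 hcv (Nat.le_succ n)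
      have hMn : M n ≤ M q * seqQuot M (n + 1) ^ (n - q) := by
        refine le_trans (ih hq) ?_
        apply mul_le_mul_of_nonneg_left _ (le_of_lt (hpos q))
        exact pow_le_pow_left₀ (le_of_lt (seqQuot_pos hpos n)) hmono _
      calc M n * seqQuot M (n + 1)
          ≤ (M q * seqQuot M (n + 1) ^ (n - q)) * seqQuot M (n + 1) :=
            mul_le_mul_of_nonneg_right hMn (le_of_lt (seqQuot_pos hpos _))
        _ = M q * (seqQuot M (n + 1) ^ (n - q) * seqQuot M (n + 1)) := by ring

lemma mul_pow_le_M {q r : ℕ} (h : q ≤ r) : M q * seqQuot M (q + 1) ^ (r - q) ≤ M r := by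
  induction r with
  | zero => interval_cases q; simp
  | succ n ih =>
    rcases Nat.eq_or_lt_of_le h with rfl | hlt
    · simp
    · have hq : q ≤ n := Nat.lt_succ_iff.mp hlt
      have h2 : n + 1 - q = (n - q) + 1 := by omega
      rw [M_succ_eq hpos, h2, pow_succ]
      have hmono : seqQuot M (q + 1) ≤ seqQuot M (n + 1) :=
        seqQuot_mono hpos h0 h1 hcv (by omega)
      calc M q * (seqQuot M (q + 1) ^ (n - q) * seqQuot M (q + 1))
          = (M q * seqQuot M (q + 1) ^ (n - q)) * seqQuot M (q + 1) := by ring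
        _ ≤ M n * seqQuot M (n + 1) := by
            apply mul_le_mul (ih hq) hmono (le_of_lt (seqQuot_pos hpos _))
            exact le_of_lt (hpos n)

variable (htend : Filter.Tendsto (fun p : ℕ => (M p) ^ ((p : ℝ)⁻¹)) Filter.atTop Filter.atTop)

section omegalemmas
include hpos htend
omit h0 h1 hcv

lemma bddAbove_omega (s : ℝ) (hs : 0 ≤ s) :
    BddAbove (Set.range fun p : ℕ => Real.log (s ^ p / M p)) := by
  obtain ⟨N, hN⟩ := Filter.eventually_atTop.mp (htend.eventually_ge_atTop (s + 1))
  refine ⟨(0:ℝ) ⊔ (Finset.range (N+1)).sup' ⟨0, by simp⟩ (fun p => Real.log (s ^ p / M p)), ?_⟩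
  rintro x ⟨p, rfl⟩
  by_cases hp : p ≤ N
  · exact le_trans (Finset.le_sup' (fun p => Real.log (s ^ p / M p))
      (Finset.mem_range.mpr (Nat.lt_succ_of_le hp))) le_sup_right
  · push_neg at hp
    have hp1 : 1 ≤ p := by omega
    have h2 : s + 1 ≤ (M p) ^ ((p : ℝ)⁻¹) := hN p hp.le
    have h3 : s ^ p ≤ M p := by
      calc s ^ p ≤ (s + 1) ^ p := pow_le_pow_left₀ hs (by linarith) p
        _ ≤ ((M p) ^ ((p : ℝ)⁻¹)) ^ p :=
            pow_le_pow_left₀ (by linarith) h2 p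
        _ = M p := by
            rw [← Real.rpow_natCast ((M p) ^ ((p : ℝ)⁻¹)) p, ← Real.rpow_mul (le_of_lt (hpos p)),
              inv_mul_cancel₀ (Nat.cast_ne_zero.mpr (by omega)),
              Real.rpow_one]
    refine le_trans (le_trans ?_ (le_refl (0:ℝ))) le_sup_left
    apply Real.log_nonpos (div_nonneg (pow_nonneg hs p) (le_of_lt (hpos p)))
    rw [div_le_one (hpos p)]; exact h3

lemma le_omegaM (s : ℝ) (hs : 0 ≤ s) (p : ℕ) :
    Real.log (s ^ p / M p) ≤ omegaM M s :=
  le_ciSup (bddAbove_omega hpos htend s hs) p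

omit htend in
include h0 in
omit hpos in
lemma omegaM_nonneg_aux (s : ℝ)
    (hbdd : BddAbove (Set.range fun p : ℕ => Real.log (s ^ p / M p))) :
    0 ≤ omegaM M s := by
  have := le_ciSup hbdd 0
  simp [h0] at this; exact this

include h0 in
lemma omegaM_nonneg (s : ℝ) (hs : 0 ≤ s) : 0 ≤ omegaM M s :=
  omegaM_nonneg_aux h0 s (bddAbove_omega hpos htend s hs)

omit hpos htend in
lemma omegaM_le {N : ℕ → ℝ} (s B : ℝ) (h : ∀ p : ℕ, Real.log (s ^ p / N p) ≤ B) :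
    omegaM N s ≤ B :=
  ciSup_le h

end omegalemmas

include hpos h0 h1 hcv in
lemma omega_at_quot (n : ℕ) :
    omegaM M (seqQuot M (n + 1)) ≤ Real.log ((seqQuot M (n + 1)) ^ n / M n) := by
  set s := seqQuot M (n + 1) with hsdef
  have hs : 0 < s := seqQuot_pos hpos _
  apply ciSup_le
  intro q
  apply Real.log_le_log (div_pos (pow_pos hs q) (hpos q))
  rw [div_le_div_iff₀ (hpos q) (hpos n)]
  rcases le_total q n with hqn | hnq
  · have h1' : M n ≤ M q * (seqQuot M n) ^ (n - q) := M_le_mul_pow hpos h0 h1 hcv hqn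
    have h2' : M q * (seqQuot M n) ^ (n - q) ≤ M q * s ^ (n - q) := by
      apply mul_le_mul_of_nonneg_left _ (le_of_lt (hpos q))
      exact pow_le_pow_left₀ (le_of_lt (seqQuot_pos hpos n))
        (seqQuot_mono hpos h0 h1 hcv (Nat.le_succ n)) _
    calc s ^ q * M n ≤ s ^ q * (M q * s ^ (n - q)) :=
          mul_le_mul_of_nonneg_left (le_trans h1' h2') (le_of_lt (pow_pos hs q))
      _ = s ^ (q + (n - q)) * M q := by rw [pow_add]; ring
      _ = s ^ n * M q := by rw [Nat.add_sub_cancel' hqn]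
  · have h1' : M n * s ^ (q - n) ≤ M q := mul_pow_le_M hpos h0 h1 hcv hnq
    calc s ^ q * M n = s ^ (n + (q - n)) * M n := by rw [Nat.add_sub_cancel' hnq]
      _ = s ^ n * (M n * s ^ (q - n)) := by rw [pow_add]; ring
      _ ≤ s ^ n * M q := mul_le_mul_of_nonneg_left h1' (le_of_lt (pow_pos hs n))

include hpos h0 h1 hcv htend in
lemma dir2 (d : ℕ) (hd : 0 < d) (A : ℝ) (hA : 1 ≤ A)
    (hgm : ∀ p : ℕ, 1 ≤ p → seqQuot M p ≤ A * (M (d * p)) ^ (((d : ℝ) * (p : ℝ))⁻¹)) :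
    ∀ t : ℝ, 0 ≤ t →
      omegaM (fun p => M p * tildeSeq M (2 * d) p) (t ^ 2) ≤ omegaM M (A * t) + 0 := by
  intro t ht
  rw [add_zero]
  have hAt : 0 ≤ A * t := mul_nonneg (by linarith) ht
  have hω0 : 0 ≤ omegaM M (A * t) := omegaM_nonneg hpos h0 htend _ hAt
  apply ciSup_le
  intro p
  rcases Nat.eq_zero_or_pos p with rfl | hp
  · simpa [tildeSeq, h0] using hω0
  rcases eq_or_lt_of_le ht with rfl | htpos
  · have hz : ((0:ℝ)) ^ p = 0 := zero_pow (by omega)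
    simpa [hz, zero_pow (by omega : p ≠ 0)] using hω0
  -- t > 0 case
  have hT : (0:ℝ) < tildeSeq M (2 * d) p := Real.rpow_pos_of_pos (hpos _) _
  refine le_trans ?_ (le_omegaM hpos htend (A * t) hAt (2 * p))
  apply Real.log_le_log
  · exact div_pos (pow_pos (pow_pos htpos 2) p) (mul_pos (hpos p) hT)
  rw [div_le_div_iff₀ (mul_pos (hpos p) hT) (hpos (2 * p))]
  have e1 : (t ^ 2) ^ p = t ^ (2 * p) := (pow_mul t 2 p).symm
  have e2 : (A * t) ^ (2 * p) = A ^ (2 * p) * t ^ (2 * p) := mul_pow A t (2 * p)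
  rw [e1, e2]
  -- suffices: M (2p) ≤ A^(2p) * (M p * T)
  have key : M (2 * p) ≤ A ^ (2 * p) * (M p * tildeSeq M (2 * d) p) := by
    have h1' : M (2 * p) ≤ M p * seqQuot M (2 * p) ^ p := by
      have := M_le_mul_pow hpos h0 h1 hcv (by omega : p ≤ 2 * p)
      have hsub : 2 * p - p = p := by omega
      rwa [hsub] at this
    have h2' : seqQuot M (2 * p) ≤ A * (M (d * (2 * p))) ^ (((d : ℝ) * ((2 * p : ℕ) : ℝ))⁻¹) :=
      hgm (2 * p) (by omega)
    have h3' : seqQuot M (2 * p) ^ p ≤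
        (A * (M (d * (2 * p))) ^ (((d : ℝ) * ((2 * p : ℕ) : ℝ))⁻¹)) ^ p :=
      pow_le_pow_left₀ (le_of_lt (seqQuot_pos hpos _)) h2' p
    have h4' : ((M (d * (2 * p))) ^ (((d : ℝ) * ((2 * p : ℕ) : ℝ))⁻¹)) ^ p
        = tildeSeq M (2 * d) p := by
      rw [← Real.rpow_natCast ((M (d * (2 * p))) ^ (((d : ℝ) * ((2 * p : ℕ) : ℝ))⁻¹)) p,
        ← Real.rpow_mul (le_of_lt (hpos _))]
      unfold tildeSeq
      have hi : d * (2 * p) = 2 * d * p := by ring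
      rw [hi]
      congr 1
      have hdp : ((d : ℝ)) ≠ 0 := Nat.cast_ne_zero.mpr (by omega)
      have hpp : ((p : ℝ)) ≠ 0 := Nat.cast_ne_zero.mpr (by omega)
      push_cast
      field_simp
    have h5' : (A * (M (d * (2 * p))) ^ (((d : ℝ) * ((2 * p : ℕ) : ℝ))⁻¹)) ^ p
        = A ^ p * tildeSeq M (2 * d) p := by rw [mul_pow, h4']
    have h6' : A ^ p ≤ A ^ (2 * p) := pow_le_pow_right₀ hA (by omega)
    calc M (2 * p) ≤ M p * seqQuot M (2 * p) ^ p := h1'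
      _ ≤ M p * (A ^ p * tildeSeq M (2 * d) p) := by
          apply mul_le_mul_of_nonneg_left _ (le_of_lt (hpos p))
          rw [← h5']; exact h3'
      _ ≤ M p * (A ^ (2 * p) * tildeSeq M (2 * d) p) := by
          apply mul_le_mul_of_nonneg_left _ (le_of_lt (hpos p))
          exact mul_le_mul_of_nonneg_right h6' (le_of_lt hT)
      _ = A ^ (2 * p) * (M p * tildeSeq M (2 * d) p) := by ring
  calc t ^ (2 * p) * M (2 * p)
      ≤ t ^ (2 * p) * (A ^ (2 * p) * (M p * tildeSeq M (2 * d) p)) :=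
        mul_le_mul_of_nonneg_left key (pow_nonneg ht _)
    _ = A ^ (2 * p) * t ^ (2 * p) * (M p * tildeSeq M (2 * d) p) := by ring

include hpos h0 h1 hcv htend in
lemma dir3 (a : ℕ) (ha : 0 < a) (A C : ℝ) (hA : 1 ≤ A) (hC : 0 ≤ C)
    (h : ∀ t : ℝ, 0 ≤ t →
      omegaM (fun p => M p * tildeSeq M a p) (t ^ 2) ≤ omegaM M (A * t) + C) :
    ∀ p : ℕ, 1 ≤ p → seqQuot M p ≤ (A ^ 2 * Real.exp C) * (M (a * p)) ^ (((a : ℝ) * (p : ℝ))⁻¹) := by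
  intro p hp
  have hApos : (0:ℝ) < A := by linarith
  set s : ℝ := seqQuot M (2 * p + 1) with hsdef
  have hs1 : 1 ≤ s := one_le_seqQuot hpos h0 h1 hcv _
  have hspos : 0 < s := by linarith
  set t : ℝ := s / A with htdef
  have htpos : 0 < t := div_pos hspos hApos
  have hAt : A * t = s := by rw [htdef]; field_simp
  -- N is the product sequence
  set T : ℕ → ℝ := fun q => tildeSeq M a q with hTdef
  have hTpos : ∀ q, 0 < T q := fun q => Real.rpow_pos_of_pos (hpos _) _
  have hTone : ∀ q, 1 ≤ T q := by
    intro q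
    have : (1:ℝ) = (1:ℝ) ^ ((a:ℝ)⁻¹) := (Real.one_rpow _).symm
    rw [this]
    exact Real.rpow_le_rpow zero_le_one (one_le_M hpos h0 h1 hcv _) (by positivity)
  -- bddAbove for the product sequence at t^2
  have hbddN : BddAbove (Set.range fun q : ℕ => Real.log ((t ^ 2) ^ q / (M q * T q))) := by
    obtain ⟨B, hB⟩ := bddAbove_omega hpos htend (t ^ 2) (sq_nonneg t)
    refine ⟨B, ?_⟩
    rintro x ⟨q, rfl⟩
    refine le_trans ?_ (hB ⟨q, rfl⟩)
    apply Real.log_le_log (div_pos (pow_pos (pow_pos htpos 2) q) (mul_pos (hpos q) (hTpos q)))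
    apply div_le_div_of_nonneg_left (pow_nonneg (sq_nonneg t) q) (hpos q)
    calc M q = M q * 1 := (mul_one _).symm
      _ ≤ M q * T q := mul_le_mul_of_nonneg_left (hTone q) (le_of_lt (hpos q))
  -- the key chain
  have hterm : Real.log ((t ^ 2) ^ p / (M p * T p)) ≤
      omegaM (fun q => M q * T q) (t ^ 2) := le_ciSup hbddN p
  have hchain : Real.log ((t ^ 2) ^ p / (M p * T p)) ≤
      Real.log (s ^ (2 * p) / M (2 * p)) + C := by
    refine le_trans hterm (le_trans (h t (le_of_lt htpos)) ?_)
    rw [hAt]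
    have := omega_at_quot hpos h0 h1 hcv (2 * p)
    linarith
  -- turn into log arithmetic
  have e1 : Real.log ((t ^ 2) ^ p / (M p * T p))
      = (2 * p : ℕ) * Real.log t - Real.log (M p) - (a:ℝ)⁻¹ * Real.log (M (a * p)) := by
    rw [Real.log_div (ne_of_gt (pow_pos (pow_pos htpos 2) p))
      (ne_of_gt (mul_pos (hpos p) (hTpos p))), Real.log_mul (ne_of_gt (hpos p))
      (ne_of_gt (hTpos p)), ← pow_mul, Real.log_pow]
    simp only [hTdef, tildeSeq]
    rw [Real.log_rpow (hpos _)]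
    push_cast
    ring
  have e2 : Real.log (s ^ (2 * p) / M (2 * p))
      = (2 * p : ℕ) * Real.log s - Real.log (M (2 * p)) := by
    rw [Real.log_div (by positivity) (ne_of_gt (hpos _)), Real.log_pow]
  have e3 : Real.log t = Real.log s - Real.log A :=
    Real.log_div (ne_of_gt hspos) (ne_of_gt hApos)
  have hkey : Real.log (M (2 * p)) ≤
      Real.log (M p) + (a:ℝ)⁻¹ * Real.log (M (a * p)) + (2 * p : ℕ) * Real.log A + C := by
    rw [e1, e2, e3] at hchain
    linarith
  -- lower bound for M (2p)
  have hlow : Real.log (M p) + (p : ℝ) * Real.log (seqQuot M p) ≤ Real.log (M (2 * p)) := by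
    have h1' : M p * (seqQuot M p) ^ p ≤ M (2 * p) := by
      have h2' := mul_pow_le_M hpos h0 h1 hcv (by omega : p ≤ 2 * p)
      have hsub : 2 * p - p = p := by omega
      rw [hsub] at h2'
      refine le_trans ?_ h2'
      apply mul_le_mul_of_nonneg_left _ (le_of_lt (hpos p))
      exact pow_le_pow_left₀ (le_of_lt (seqQuot_pos hpos p))
        (seqQuot_mono hpos h0 h1 hcv (Nat.le_succ p)) p
    calc Real.log (M p) + (p:ℝ) * Real.log (seqQuot M p)
        = Real.log (M p * (seqQuot M p) ^ p) := by
          rw [Real.log_mul (ne_of_gt (hpos p))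
            (ne_of_gt (pow_pos (seqQuot_pos hpos p) p)), Real.log_pow]
      _ ≤ Real.log (M (2 * p)) :=
          Real.log_le_log (mul_pos (hpos p) (pow_pos (seqQuot_pos hpos p) p)) h1'
  set x : ℝ := ((a : ℝ) * (p : ℝ))⁻¹ with hxdef
  have hapos : (0:ℝ) < (a:ℝ) := by exact_mod_cast ha
  have hppos : (0:ℝ) < (p:ℝ) := by exact_mod_cast hp
  have hx : (p:ℝ) * x = (a:ℝ)⁻¹ := by
    rw [hxdef, mul_inv]
    field_simp
  have hR : A ^ 2 * Real.exp C * (M (a * p)) ^ x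
      = Real.exp (Real.log (A ^ 2) + C + x * Real.log (M (a * p))) := by
    rw [Real.exp_add, Real.exp_add, Real.exp_log (by positivity),
      Real.rpow_def_of_pos (hpos _), mul_comm (Real.log (M (a * p))) x]
  rw [hR, ← Real.exp_log (seqQuot_pos hpos p)]
  apply Real.exp_le_exp.mpr
  have hCp : C ≤ (p:ℝ) * C := le_mul_of_one_le_left hC (by exact_mod_cast hp)
  have hmul : (p:ℝ) * Real.log (seqQuot M p)
      ≤ (p:ℝ) * (Real.log (A ^ 2) + C + x * Real.log (M (a * p))) := by
    have hexp : (p:ℝ) * (Real.log (A ^ 2) + C + x * Real.log (M (a * p)))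
        = ((2 * p : ℕ) : ℝ) * Real.log A + (p:ℝ) * C + (a:ℝ)⁻¹ * Real.log (M (a * p)) := by
      rw [Real.log_pow]
      push_cast
      rw [← hx]
      ring
    rw [hexp]
    linarith [hkey, hlow, hCp]
  exact le_of_mul_le_mul_left hmul hppos

end aux

theorem stmt13 (M : ℕ → ℝ) (hM : IsLC M) :
    ((∃ d : ℕ, 0 < d ∧ genMG M d) ↔ (∃ a : ℕ, 0 < a ∧ S13P M a)) ∧
    (∀ d : ℕ, 0 < d → genMG M d → S13P M (2 * d)) ∧
    (∀ a : ℕ, 0 < a → S13P M a → genMG M a) := by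
  obtain ⟨hpos, h0, h1, hcv, htend⟩ := hM
  have part2 : ∀ d : ℕ, 0 < d → genMG M d → S13P M (2 * d) := by
    rintro d hd ⟨A, hA, hgm⟩
    exact ⟨A, hA, 0, le_refl 0, dir2 hpos h0 h1 hcv htend d hd A hA hgm⟩
  have part3 : ∀ a : ℕ, 0 < a → S13P M a → genMG M a := by
    rintro a ha ⟨A, hA, C, hC, h⟩
    refine ⟨A ^ 2 * Real.exp C, ?_, dir3 hpos h0 h1 hcv htend a ha A C hA hC h⟩
    have h1' : (1:ℝ) ≤ Real.exp C := Real.one_le_exp hC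
    nlinarith
  refine ⟨⟨?_, ?_⟩, part2, part3⟩
  · rintro ⟨d, hd, hg⟩
    exact ⟨2 * d, by omega, part2 d hd hg⟩
  · rintro ⟨a, ha, hs⟩
    exact ⟨a, ha, part3 a ha hs⟩
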